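/- For the DST-IV basis vectors v_j ∈ R^N with v_j(k) = sqrt(2/N) sin((j-1/2)(k-1/2)π/N), the vector v_j is an eigenvector of L_A (tridiagonal with diagonal (3,2,...,2,1) and off-diagonals -1) with eigenvalue δ_j = 2 - 2cos((j-1/2)π/N). -/
import Mathlib


open Real

/-- ADST Laplacian `L_A`: tridiagonal with diagonal (3,2,...,2,1) and off-diagonals -1. -/
noncomputable def LA (N : ℕ) : Matrix (Fin N) (Fin N) ℝ :=
  Matrix.of fun p q =>
    if p = q then (if (p : ℕ) = 0 then 3 else if (p : ℕ) = N - 1 then 1 else 2)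
    else if (p : ℕ) + 1 = (q : ℕ) ∨ (q : ℕ) + 1 = (p : ℕ) then -1 else 0

/-- DST-IV basis vector (zero-based `j`, `k`):
`v_j(k) = √(2/N) sin((j+1/2)(k+1/2)π/N)`. -/
noncomputable def vDST (N : ℕ) (j : Fin N) : Fin N → ℝ := fun k =>
  Real.sqrt (2 / N) * Real.sin (((j : ℝ) + 1 / 2) * ((k : ℝ) + 1 / 2) * Real.pi / N)

lemma sum_tridiag (N k : ℕ) (hk : k < N) (d : ℝ) (s : ℕ → ℝ) :
    ∑ i ∈ Finset.range N,
      (if k = i then d else if k + 1 = i ∨ i + 1 = k then (-1 : ℝ) else 0) * s i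
    = d * s k + (if k + 1 < N then -(s (k + 1)) else 0)
        + (if k = 0 then 0 else -(s (k - 1))) := by
  have hsplit : ∀ i ∈ Finset.range N,
      (if k = i then d else if k + 1 = i ∨ i + 1 = k then (-1 : ℝ) else 0) * s i
      = (if i = k then d * s i else 0) + (if i = k + 1 then -(s i) else 0)
          + (if i + 1 = k then -(s i) else 0) := by
    intro i _
    split_ifs <;> first | (exfalso; omega) | ring
  rw [Finset.sum_congr rfl hsplit]
  rw [Finset.sum_add_distrib, Finset.sum_add_distrib]
  rw [Finset.sum_ite_eq' (Finset.range N) k (fun i => d * s i)]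
  rw [Finset.sum_ite_eq' (Finset.range N) (k + 1) (fun i => -(s i))]
  have h3 : (∑ i ∈ Finset.range N, if i + 1 = k then -(s i) else 0)
      = if k = 0 then 0 else -(s (k - 1)) := by
    by_cases hk0 : k = 0
    · subst hk0; simp
    · rw [if_neg hk0]
      have : ∀ i, (i + 1 = k) ↔ (i = k - 1) := fun i => by omega
      simp only [this]
      rw [Finset.sum_ite_eq' (Finset.range N) (k - 1) (fun i => -(s i))]
      rw [if_pos (Finset.mem_range.mpr (by omega))]
  rw [h3]
  simp only [Finset.mem_range, if_pos hk]

theorem dst4_eigenvector_of_LA (N : ℕ) (hN : 2 ≤ N) (j : Fin N) :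
    (LA N).mulVec (vDST N j) =
      (2 - 2 * Real.cos (((j : ℝ) + 1 / 2) * Real.pi / N)) • vDST N j := by
  have hNR : (N : ℝ) ≠ 0 := Nat.cast_ne_zero.mpr (by omega)
  set c : ℝ := (j : ℝ) + 1 / 2 with hc
  set s : ℕ → ℝ := fun k =>
    Real.sqrt (2 / N) * Real.sin (c * ((k : ℝ) + 1 / 2) * π / N) with hs
  set C : ℝ := Real.cos (c * π / N) with hC
  -- recurrence
  have key : ∀ k : ℕ, s (k + 2) + s k = 2 * C * s (k + 1) := by
    intro k
    simp only [hs, hC]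
    push_cast
    have h1 : c * (((k : ℝ) + 2) + 1 / 2) * π / N
        = c * (((k : ℝ) + 1) + 1 / 2) * π / N + c * π / N := by ring
    have h2 : c * ((k : ℝ) + 1 / 2) * π / N
        = c * (((k : ℝ) + 1) + 1 / 2) * π / N - c * π / N := by ring
    rw [h1, h2, Real.sin_add, Real.sin_sub]
    ring
  -- bottom boundary
  have hs1 : s 1 = (2 * C + 1) * s 0 := by
    simp only [hs, hC]
    push_cast
    have h1 : c * ((1 : ℝ) + 1 / 2) * π / N
        = 2 * (c * π / N / 2) + (c * π / N / 2) := by ring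
    have h0 : c * ((0 : ℝ) + 1 / 2) * π / N = c * π / N / 2 := by ring
    rw [h1, h0, Real.sin_add, Real.sin_two_mul, Real.cos_two_mul,
      show c * π / N = 2 * (c * π / N / 2) by ring, Real.cos_two_mul]
    ring
  -- top boundary
  have hsN : s N = s (N - 1) := by
    obtain ⟨m, rfl⟩ : ∃ m, N = m + 2 := ⟨N - 2, by omega⟩
    have hm : ((m : ℝ) + 2) ≠ 0 := by positivity
    simp only [hs, Nat.add_sub_cancel]
    push_cast
    have hA : Real.cos ((j : ℝ) * π + π / 2) = 0 := by
      rw [Real.cos_add, Real.cos_pi_div_two, Real.sin_pi_div_two]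
      have : Real.sin ((j : ℝ) * π) = 0 := by
        have := Real.sin_nat_mul_pi (j : ℕ)
        simpa using this
      simp [this]
    have h1 : c * (((m : ℝ) + 2) + 1 / 2) * π / ((m : ℝ) + 2)
        = ((j : ℝ) * π + π / 2) + c * π / ((m : ℝ) + 2) / 2 := by
      rw [hc]; field_simp
    have h2 : c * (((m : ℝ) + 1) + 1 / 2) * π / ((m : ℝ) + 2)
        = ((j : ℝ) * π + π / 2) - c * π / ((m : ℝ) + 2) / 2 := by
      rw [hc]; field_simp; ring
    rw [h1, h2, Real.sin_add, Real.sin_sub, hA]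
    ring
  funext k
  have hk : (k : ℕ) < N := k.isLt
  have hv : ∀ q : Fin N, vDST N j q = s (q : ℕ) := fun q => rfl
  have lhs_eq : (LA N).mulVec (vDST N j) k
      = ∑ i ∈ Finset.range N,
        (if (k : ℕ) = i then
            (if (k : ℕ) = 0 then 3 else if (k : ℕ) = N - 1 then 1 else 2)
          else if (k : ℕ) + 1 = i ∨ i + 1 = (k : ℕ) then (-1 : ℝ) else 0) * s i := by
    rw [Matrix.mulVec, dotProduct]
    rw [← Fin.sum_univ_eq_sum_range (fun i =>
      (if (k : ℕ) = i then
          (if (k : ℕ) = 0 then 3 else if (k : ℕ) = N - 1 then 1 else 2)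
        else if (k : ℕ) + 1 = i ∨ i + 1 = (k : ℕ) then (-1 : ℝ) else 0) * s i) N]
    refine Finset.sum_congr rfl fun q _ => ?_
    rw [hv q]
    simp only [LA, Matrix.of_apply, Fin.ext_iff]
  rw [lhs_eq, sum_tridiag N (k : ℕ) hk _ s]
  rw [Pi.smul_apply, smul_eq_mul, hv k]
  set kk := (k : ℕ) with hkk
  by_cases hk0 : kk = 0
  · rw [hk0]
    rw [if_pos rfl, if_pos (by omega), if_pos rfl]
    rw [hs1]
    ring
  · rw [if_neg hk0, if_neg hk0]
    by_cases hktop : kk = N - 1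
    · rw [if_pos hktop, if_neg (by omega)]
      obtain ⟨m, rfl⟩ : ∃ m, N = m + 2 := ⟨N - 2, by omega⟩
      have hkk2 : kk = m + 1 := by omega
      rw [hkk2]
      have hrec := key m
      have hN' : s (m + 2) = s (m + 1) := by
        have := hsN
        simpa using this
      simp only [Nat.add_sub_cancel]
      nlinarith [hrec, hN']
    · rw [if_neg hktop, if_pos (by omega)]
      obtain ⟨t, ht⟩ : ∃ t, kk = t + 1 := ⟨kk - 1, by omega⟩
      rw [ht]
      have hrec := key t
      simp only [Nat.add_sub_cancel]
      nlinarith [hrec]
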